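/- arXiv:1702.03504 — 3 statements merged into one kernel-verified Lean document; each statement's English description precedes it below -/
import Mathlib

section
/- Let X, Y, Z be independent random variables on a probability space (Ω, ℙ), each uniformly distributed on the interval [0, 1/2]. Let ℓ ≥ 0 be a real number with fractional part {ℓ} ≥ 1/2, and define the random variable T := ⌊1 + X + ℓ⌋ + 1 + Z − (2 + Y). Then for every real number x, ℙ(T ≤ x) = (2 − 2{ℓ}) · ℙ(Z − Y ≤ x − ⌊ℓ⌋) + (2{ℓ} − 1) · ℙ(Z − Y ≤ x − ⌊ℓ⌋ − 1). -/
open MeasureTheory ProbabilityTheory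

/-!
For `X ∈ [0, 1/2]` we have `⌊1 + X + ℓ⌋ = ⌊ℓ⌋ + 1` or `⌊ℓ⌋ + 2` according as `X < 1 - {ℓ}` or not,
so `T = (Z - Y) + ⌊ℓ⌋ + 𝟙{1 - {ℓ} ≤ X}`. Splitting on the value of `X` and using that `X` is
independent of `Z - Y` gives the mixture, with weights `ℙ(X < 1 - {ℓ}) = 2 - 2{ℓ}` and
`ℙ(1 - {ℓ} ≤ X) = 2{ℓ} - 1`.
-/

namespace MeasureTheory.pdf.IsUniform

variable {Ω : Type*} {_ : MeasurableSpace Ω} {P : Measure Ω}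

theorem ae_mem {E : Type*} [MeasurableSpace E] {μ : Measure E} {X : Ω → E} {s : Set E}
    (hs : MeasurableSet s) (hns : μ s ≠ 0) (hnt : μ s ≠ ⊤) (hu : IsUniform X s P μ) :
    ∀ᵐ ω ∂P, X ω ∈ s := by
  have := hu.measure_preimage hns hnt hs.compl
  rwa [Set.inter_compl_self, measure_empty, ENNReal.zero_div] at this

variable {X : Ω → ℝ} {a b c : ℝ}

theorem measure_lt_of_Icc (hab : a < b) (hcb : c ≤ b) (hu : IsUniform X (Set.Icc a b) P) :
    P {ω | X ω < c} = ENNReal.ofReal ((c - a) / (b - a)) := by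
  have hIcc : Set.Icc a b ∩ Set.Iio c = Set.Ico a c := by
    ext; simp only [Set.mem_inter_iff, Set.mem_Icc, Set.mem_Iio, Set.mem_Ico]; grind
  change P (X ⁻¹' Set.Iio c) = _
  rw [hu.measure_preimage (by simp [Real.volume_Icc, hab]) (by simp [Real.volume_Icc])
    measurableSet_Iio, hIcc, Real.volume_Ico, Real.volume_Icc,
    ← ENNReal.ofReal_div_of_pos (by linarith)]

theorem measure_ge_of_Icc (hab : a < b) (hac : a ≤ c)
    (hu : IsUniform X (Set.Icc a b) P) :
    P {ω | c ≤ X ω} = ENNReal.ofReal ((b - c) / (b - a)) := by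
  have hIcc : Set.Icc a b ∩ Set.Ici c = Set.Icc c b := by
    ext; simp only [Set.mem_inter_iff, Set.mem_Icc, Set.mem_Ici]; grind
  change P (X ⁻¹' Set.Ici c) = _
  rw [hu.measure_preimage (by simp [Real.volume_Icc, hab]) (by simp [Real.volume_Icc])
    measurableSet_Ici, hIcc, Real.volume_Icc, Real.volume_Icc,
    ← ENNReal.ofReal_div_of_pos (by linarith)]

end MeasureTheory.pdf.IsUniform

theorem Int.floor_add_of_nonneg_of_lt_one {ℓ t : ℝ} (ht₀ : 0 ≤ t) (ht₁ : t < 1) :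
    ⌊ℓ + t⌋ = ⌊ℓ⌋ + if 1 - Int.fract ℓ ≤ t then 1 else 0 := by
  rw [Int.floor_eq_iff]
  have := Int.floor_add_fract ℓ
  have := Int.fract_lt_one ℓ
  have := Int.fract_nonneg ℓ
  split_ifs <;> push_cast <;> constructor <;> linarith

theorem ProbabilityTheory.IndepFun.measure_add_ite_le {Ω : Type*} {_ : MeasurableSpace Ω}
    {P : Measure Ω} {D X : Ω → ℝ} (hDX : IndepFun D X P) (hD : AEMeasurable D P)
    (hX : AEMeasurable X P) (c y : ℝ) :
    P {ω | D ω + (if c ≤ X ω then 1 else 0) ≤ y}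
      = P {ω | D ω ≤ y} * P {ω | X ω < c} + P {ω | D ω ≤ y - 1} * P {ω | c ≤ X ω} := by
  have hsplit : {ω | D ω + (if c ≤ X ω then 1 else 0) ≤ y}
      = D ⁻¹' Set.Iic y ∩ X ⁻¹' Set.Iio c ∪ D ⁻¹' Set.Iic (y - 1) ∩ X ⁻¹' Set.Ici c := by
    ext ω
    by_cases h : c ≤ X ω
    · simp [h, le_sub_iff_add_le]
    · simp [h, lt_of_not_ge h]
  have hdisj : Disjoint (D ⁻¹' Set.Iic y ∩ X ⁻¹' Set.Iio c)
      (D ⁻¹' Set.Iic (y - 1) ∩ X ⁻¹' Set.Ici c) :=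
    ((Set.Iio_disjoint_Ici le_rfl).preimage X).mono Set.inter_subset_right Set.inter_subset_right
  rw [hsplit, measure_union₀ ((hD.nullMeasurableSet_preimage measurableSet_Iic).inter
      (hX.nullMeasurableSet_preimage measurableSet_Ici)) hdisj.aedisjoint,
    hDX.measure_inter_preimage_eq_mul _ _ measurableSet_Iic measurableSet_Iio,
    hDX.measure_inter_preimage_eq_mul _ _ measurableSet_Iic measurableSet_Ici]
  rfl

theorem stmt_3_general {Ω : Type*} [MeasurableSpace Ω] (P : Measure Ω)
    (X Y Z : Ω → ℝ)
    (hIndep : iIndepFun ![X, Y, Z] P)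
    (hX : pdf.IsUniform X (Set.Icc (0 : ℝ) (1 / 2)) P)
    (hY : pdf.IsUniform Y (Set.Icc (0 : ℝ) (1 / 2)) P)
    (hZ : pdf.IsUniform Z (Set.Icc (0 : ℝ) (1 / 2)) P)
    (ℓ : ℝ) (hfrac : 1 / 2 ≤ Int.fract ℓ) (x : ℝ) :
    P {ω | (⌊1 + X ω + ℓ⌋ : ℝ) + 1 + Z ω - (2 + Y ω) ≤ x}
      = ENNReal.ofReal (2 - 2 * Int.fract ℓ) * P {ω | Z ω - Y ω ≤ x - (⌊ℓ⌋ : ℝ)}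
        + ENNReal.ofReal (2 * Int.fract ℓ - 1) * P {ω | Z ω - Y ω ≤ x - (⌊ℓ⌋ : ℝ) - 1} := by
  have hns : volume (Set.Icc (0 : ℝ) (1 / 2)) ≠ 0 := by simp [Real.volume_Icc]
  have hnt : volume (Set.Icc (0 : ℝ) (1 / 2)) ≠ ⊤ := by simp [Real.volume_Icc]
  have hXm := hX.aemeasurable hns hnt
  have hYm := hY.aemeasurable hns hnt
  have hZm := hZ.aemeasurable hns hnt
  have hDX : IndepFun (fun ω => Z ω - Y ω) X P := by
    have hYZ_X := hIndep.indepFun_prodMk₀ (fun i => by fin_cases i <;> assumption) 1 2 0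
      (by decide) (by decide)
    exact hYZ_X.comp (φ := fun p : ℝ × ℝ => p.2 - p.1) (measurable_snd.sub measurable_fst)
      measurable_id
  have hevent : {ω | (⌊1 + X ω + ℓ⌋ : ℝ) + 1 + Z ω - (2 + Y ω) ≤ x} =ᵐ[P]
      {ω | Z ω - Y ω + (if 1 - Int.fract ℓ ≤ X ω then 1 else 0) ≤ x - ⌊ℓ⌋} := by
    rw [Filter.eventuallyEq_set]
    filter_upwards [hX.ae_mem measurableSet_Icc hns hnt] with ω ⟨hX₀, hX₁⟩
    have hfloor : ⌊1 + X ω + ℓ⌋ = ⌊ℓ + X ω⌋ + 1 := by rw [← Int.floor_add_one]; ring_nf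
    have hT : (⌊1 + X ω + ℓ⌋ : ℝ) + 1 + Z ω - (2 + Y ω)
        = Z ω - Y ω + (if 1 - Int.fract ℓ ≤ X ω then 1 else 0) + ⌊ℓ⌋ := by
      rw [hfloor, Int.floor_add_of_nonneg_of_lt_one hX₀ (by linarith)]
      split_ifs <;> push_cast <;> ring
    simp only [hT, le_sub_iff_add_le]
  have hc : 1 - Int.fract ℓ ≤ 1 / 2 := by linarith
  rw [measure_congr hevent, hDX.measure_add_ite_le (hZm.sub hYm) hXm,
    hX.measure_lt_of_Icc (by norm_num) hc,
    hX.measure_ge_of_Icc (by norm_num) (by linarith [Int.fract_lt_one ℓ])]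
  have hlt : (1 - Int.fract ℓ - 0) / (1 / 2 - 0) = 2 - 2 * Int.fract ℓ := by ring
  have hge : (1 / 2 - (1 - Int.fract ℓ)) / (1 / 2 - 0) = 2 * Int.fract ℓ - 1 := by ring
  rw [hlt, hge]
  ring

/-- Case (ii) of Lemma 5 (l-F-ell) of the paper. -/
theorem stmt_3 {Ω : Type*} [MeasurableSpace Ω] (P : Measure Ω) [IsProbabilityMeasure P]
    (X Y Z : Ω → ℝ)
    (hIndep : iIndepFun ![X, Y, Z] P)
    (hX : pdf.IsUniform X (Set.Icc (0 : ℝ) (1 / 2)) P)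
    (hY : pdf.IsUniform Y (Set.Icc (0 : ℝ) (1 / 2)) P)
    (hZ : pdf.IsUniform Z (Set.Icc (0 : ℝ) (1 / 2)) P)
    (ℓ : ℝ) (hℓ : 0 ≤ ℓ) (hfrac : 1 / 2 ≤ Int.fract ℓ) (x : ℝ) :
    P {ω | (⌊1 + X ω + ℓ⌋ : ℝ) + 1 + Z ω - (2 + Y ω) ≤ x}
      = ENNReal.ofReal (2 - 2 * Int.fract ℓ) * P {ω | Z ω - Y ω ≤ x - (⌊ℓ⌋ : ℝ)}
        + ENNReal.ofReal (2 * Int.fract ℓ - 1) * P {ω | Z ω - Y ω ≤ x - (⌊ℓ⌋ : ℝ) - 1} :=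
  stmt_3_general P X Y Z hIndep hX hY hZ ℓ hfrac x
end

section
/- Let X, Y, Z be independent random variables on a probability space (Ω, ℙ), each uniformly distributed on the interval [0, 1/2]. Let R be a positive integer, let h > 0 be a real number, set ℓ := R + h, and define the random variable T := ⌊1 + X + ℓ⌋ + 1 + Z − (2 + Y). Then the probability p_error(R, h) := ℙ(T ≤ R) satisfies: p_error(R, h) = 1/2 if 0 < h ≤ 1/2; p_error(R, h) = 1 − h if 1/2 < h < 1; and p_error(R, h) = 0 if h ≥ 1. -/
open MeasureTheory ProbabilityTheory Set
open scoped ENNReal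

/-! Shifting the floor by the integer `R + 1` turns `T ≤ R` into `⌊X + h⌋ ≤ Y - Z`. As
`X + h ≥ 0` and `Y - Z ≤ 1/2 < 1`, this happens exactly when `X + h < 1` and `Z ≤ Y`, so by
independence the probability is `P(X < 1 - h) · P(Z ≤ Y)`. The second factor is `1/2` because
`(Y, Z)` is exchangeable and ties `Y = Z` are null; the three regimes of `h` are those of
`P(X < 1 - h)`. -/

instance ProbabilityTheory.cond.instNullSingletonClass {α : Type*} [MeasurableSpace α]
    {μ : Measure α} [NullSingletonClass μ] (s : Set α) : NullSingletonClass μ[|s] :=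
  ⟨fun x ↦ by rw [cond, Measure.smul_apply, measure_singleton, smul_zero]⟩

lemma Int.cast_floor_le_iff_of_nonneg_of_lt_one {α : Type*} [Field α] [LinearOrder α]
    [IsStrictOrderedRing α] [FloorRing α] {t d : α} (ht : 0 ≤ t) (hd : d < 1) :
    (⌊t⌋ : α) ≤ d ↔ t < 1 ∧ 0 ≤ d := by
  constructor
  · intro htd
    have hfloor : ⌊t⌋ = 0 := by
      have : ⌊t⌋ < 1 := by exact_mod_cast htd.trans_lt hd
      have := Int.floor_nonneg.2 ht
      omega
    rw [hfloor, Int.cast_zero] at htd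
    exact ⟨Int.floor_eq_zero_iff.1 hfloor |>.2, htd⟩
  · rintro ⟨ht1, hd0⟩
    rwa [Int.floor_eq_zero_iff.2 ⟨ht, ht1⟩, Int.cast_zero]

lemma cast_floor_one_add_add_natCast_le_iff (R : ℕ) (h x y z : ℝ) :
    (⌊1 + x + ((R : ℝ) + h)⌋ : ℝ) + 1 + z - (2 + y) ≤ R ↔ (⌊x + h⌋ : ℝ) ≤ y - z := by
  rw [show 1 + x + ((R : ℝ) + h) = x + h + ((R + 1 : ℕ) : ℝ) by push_cast; ring,
    Int.floor_add_natCast]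
  push_cast
  constructor <;> intro <;> linarith

lemma measure_prod_self_setOf_snd_le_fst (μ : Measure ℝ) [IsProbabilityMeasure μ]
    [NullSingletonClass μ] : (μ.prod μ) {p | p.2 ≤ p.1} = 2⁻¹ := by
  have hA : MeasurableSet {p : ℝ × ℝ | p.2 ≤ p.1} := measurableSet_le measurable_snd measurable_fst
  have hB : MeasurableSet {p : ℝ × ℝ | p.1 ≤ p.2} := measurableSet_le measurable_fst measurable_snd
  have hswap : (μ.prod μ) {p | p.1 ≤ p.2} = (μ.prod μ) {p | p.2 ≤ p.1} := by
    conv_lhs => rw [← Measure.prod_swap]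
    rw [Measure.map_apply measurable_swap hB]
    rfl
  have hdiag : (μ.prod μ) ({p | p.2 ≤ p.1} ∩ {p | p.1 ≤ p.2}) = 0 := by
    refine (Measure.measure_prod_null (hA.inter hB)).2 (Filter.Eventually.of_forall fun x ↦ ?_)
    have : Prod.mk x ⁻¹' ({p : ℝ × ℝ | p.2 ≤ p.1} ∩ {p | p.1 ≤ p.2}) = {x} := by
      ext y
      simp [le_antisymm_iff, and_comm]
    simp [this]
  have hunion : {p : ℝ × ℝ | p.2 ≤ p.1} ∪ {p | p.1 ≤ p.2} = univ := by
    ext p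
    simp [le_total]
  have := measure_union_add_inter {p : ℝ × ℝ | p.2 ≤ p.1} hB (μ := μ.prod μ)
  rw [hunion, hdiag, hswap, measure_univ, add_zero, ← two_mul] at this
  exact ENNReal.eq_inv_of_mul_eq_one_left (by rw [mul_comm, this])

lemma ProbabilityTheory.iIndepFun.map_prodMk_prodMk_eq_prod {Ω β : Type*} [MeasurableSpace Ω]
    [MeasurableSpace β] {P : Measure Ω} [IsProbabilityMeasure P] {X Y Z : Ω → β}
    (hind : iIndepFun ![X, Y, Z] P) (hX : AEMeasurable X P) (hY : AEMeasurable Y P)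
    (hZ : AEMeasurable Z P) :
    P.map (fun ω ↦ (X ω, Y ω, Z ω)) = (P.map X).prod ((P.map Y).prod (P.map Z)) := by
  have hmeas : ∀ i, AEMeasurable (![X, Y, Z] i) P := by
    intro i; fin_cases i <;> assumption
  have hYZ : IndepFun Y Z P := hind.indepFun (i := 1) (j := 2) (by decide)
  have hX_YZ : IndepFun X (fun ω ↦ (Y ω, Z ω)) P :=
    (hind.indepFun_prodMk₀ hmeas 1 2 0 (by decide) (by decide)).symm
  rw [(indepFun_iff_map_prod_eq_prod_map_map hX (hY.prodMk hZ)).1 hX_YZ,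
    (indepFun_iff_map_prod_eq_prod_map_map hY hZ).1 hYZ]

lemma cond_Icc_zero_Iio {a b : ℝ} (hb : 0 < b) (hab : a ≤ b) :
    volume[|Icc 0 b] (Iio a) = ENNReal.ofReal (a / b) := by
  have : Icc 0 b ∩ Iio a = Ico 0 a := by
    ext t
    simp only [mem_inter_iff, mem_Icc, mem_Iio, mem_Ico]
    constructor
    · rintro ⟨⟨h0, -⟩, hta⟩; exact ⟨h0, hta⟩
    · rintro ⟨h0, hta⟩; exact ⟨⟨h0, by linarith⟩, hta⟩
  rw [cond_apply measurableSet_Icc, this, Real.volume_Icc, Real.volume_Ico, sub_zero, sub_zero,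
    ENNReal.ofReal_div_of_pos hb, ENNReal.div_eq_inv_mul]

lemma cond_Icc_zero_Iio_of_le {a b : ℝ} (hb : 0 < b) (hba : b ≤ a) :
    volume[|Icc 0 b] (Iio a) = 1 := by
  have : IsProbabilityMeasure volume[|Icc 0 b] :=
    cond_isProbabilityMeasure_of_finite (by simp [hb]) (by simp)
  refine le_antisymm prob_le_one ?_
  calc (1 : ℝ≥0∞) = volume[|Icc 0 b] (Iio b) := by
        rw [cond_Icc_zero_Iio hb le_rfl, div_self hb.ne', ENNReal.ofReal_one]
    _ ≤ volume[|Icc 0 b] (Iio a) := measure_mono (Iio_subset_Iio hba)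

lemma measure_floor_event_eq {Ω : Type*} [MeasurableSpace Ω] {P : Measure Ω}
    [IsProbabilityMeasure P] {X Y Z : Ω → ℝ} (hIndep : iIndepFun ![X, Y, Z] P)
    (hX : pdf.IsUniform X (Icc (0 : ℝ) (1 / 2)) P) (hY : pdf.IsUniform Y (Icc (0 : ℝ) (1 / 2)) P)
    (hZ : pdf.IsUniform Z (Icc (0 : ℝ) (1 / 2)) P) (R : ℕ) {h : ℝ} (hh : 0 ≤ h) :
    P {ω | (⌊1 + X ω + ((R : ℝ) + h)⌋ : ℝ) + 1 + Z ω - (2 + Y ω) ≤ (R : ℝ)}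
      = volume[|Icc (0 : ℝ) (1 / 2)] (Iio (1 - h)) / 2 := by
  have hI0 : volume (Icc (0 : ℝ) (1 / 2)) ≠ 0 := by simp
  have hItop : volume (Icc (0 : ℝ) (1 / 2)) ≠ ∞ := by simp
  have : IsProbabilityMeasure volume[|Icc (0 : ℝ) (1 / 2)] :=
    cond_isProbabilityMeasure_of_finite hI0 hItop
  have hXm := hX.aemeasurable hI0 hItop
  have hYm := hY.aemeasurable hI0 hItop
  have hZm := hZ.aemeasurable hI0 hItop
  have hae_mem : ∀ {W : Ω → ℝ}, pdf.IsUniform W (Icc (0 : ℝ) (1 / 2)) P → AEMeasurable W P →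
      ∀ᵐ ω ∂P, W ω ∈ Icc (0 : ℝ) (1 / 2) := fun hW hWm ↦
    ae_of_ae_map hWm (hW ▸ ae_cond_mem measurableSet_Icc)
  have hS : MeasurableSet (Iio (1 - h) ×ˢ {p : ℝ × ℝ | p.2 ≤ p.1}) :=
    measurableSet_Iio.prod (measurableSet_le measurable_snd measurable_fst)
  calc P {ω | (⌊1 + X ω + ((R : ℝ) + h)⌋ : ℝ) + 1 + Z ω - (2 + Y ω) ≤ (R : ℝ)}
      = P ((fun ω ↦ (X ω, Y ω, Z ω)) ⁻¹' (Iio (1 - h) ×ˢ {p | p.2 ≤ p.1})) := by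
        refine measure_congr (Filter.eventuallyEq_set.2 ?_)
        filter_upwards [hae_mem hX hXm, hae_mem hY hYm, hae_mem hZ hZm] with ω hx hy hz
        simp only [mem_ofPred_eq, mem_preimage, mem_prod, mem_Iio]
        rw [cast_floor_one_add_add_natCast_le_iff, Int.cast_floor_le_iff_of_nonneg_of_lt_one
          (by linarith [hx.1]) (by linarith [hy.2, hz.1]), sub_nonneg, lt_sub_iff_add_lt]
    _ = P.map (fun ω ↦ (X ω, Y ω, Z ω)) (Iio (1 - h) ×ˢ {p | p.2 ≤ p.1}) :=
        (Measure.map_apply_of_aemeasurable (hXm.prodMk (hYm.prodMk hZm)) hS).symm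
    _ = volume[|Icc (0 : ℝ) (1 / 2)] (Iio (1 - h)) / 2 := by
        rw [hIndep.map_prodMk_prodMk_eq_prod hXm hYm hZm, hX, hY, hZ, Measure.prod_prod,
          measure_prod_self_setOf_snd_le_fst, ENNReal.div_eq_inv_mul, mul_comm]

theorem stmt_8_general {Ω : Type*} [MeasurableSpace Ω] (P : Measure Ω) [IsProbabilityMeasure P]
    (X Y Z : Ω → ℝ)
    (hIndep : iIndepFun ![X, Y, Z] P)
    (hX : pdf.IsUniform X (Set.Icc (0 : ℝ) (1 / 2)) P)
    (hY : pdf.IsUniform Y (Set.Icc (0 : ℝ) (1 / 2)) P)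
    (hZ : pdf.IsUniform Z (Set.Icc (0 : ℝ) (1 / 2)) P)
    (R : ℕ) (h : ℝ) (hh : 0 < h) :
    (h ≤ 1 / 2 →
      P {ω | (⌊1 + X ω + ((R : ℝ) + h)⌋ : ℝ) + 1 + Z ω - (2 + Y ω) ≤ (R : ℝ)} = 1 / 2) ∧
    (1 / 2 < h → h < 1 →
      P {ω | (⌊1 + X ω + ((R : ℝ) + h)⌋ : ℝ) + 1 + Z ω - (2 + Y ω) ≤ (R : ℝ)}
        = ENNReal.ofReal (1 - h)) ∧
    (1 ≤ h →
      P {ω | (⌊1 + X ω + ((R : ℝ) + h)⌋ : ℝ) + 1 + Z ω - (2 + Y ω) ≤ (R : ℝ)} = 0) := by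
  rw [measure_floor_event_eq hIndep hX hY hZ R hh.le]
  refine ⟨fun h_le ↦ ?_, fun _ h_lt ↦ ?_, fun h_ge ↦ ?_⟩
  · rw [cond_Icc_zero_Iio_of_le (by norm_num) (by linarith)]
  · rw [cond_Icc_zero_Iio (by norm_num) (by linarith),
      show (1 - h) / (1 / 2) = (1 - h) * 2 by ring, ENNReal.ofReal_mul' zero_le_two,
      ENNReal.ofReal_ofNat, ENNReal.mul_div_cancel_right two_ne_zero ENNReal.ofNat_ne_top]
  · rw [cond_Icc_zero_Iio (by norm_num) (by linarith),
      ENNReal.ofReal_eq_zero.2 (div_nonpos_of_nonpos_of_nonneg (by linarith) (by norm_num)),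
      ENNReal.zero_div]

/-- Theorem 3 of the paper: the probability of the erroneous decision to grant access.
Here `T ω = ⌊1 + X ω + ℓ⌋ + 1 + Z ω − (2 + Y ω)` with `ℓ = R + h`. -/
theorem stmt_8 {Ω : Type*} [MeasurableSpace Ω] (P : Measure Ω) [IsProbabilityMeasure P]
    (X Y Z : Ω → ℝ)
    (hIndep : iIndepFun ![X, Y, Z] P)
    (hX : pdf.IsUniform X (Set.Icc (0 : ℝ) (1 / 2)) P)
    (hY : pdf.IsUniform Y (Set.Icc (0 : ℝ) (1 / 2)) P)
    (hZ : pdf.IsUniform Z (Set.Icc (0 : ℝ) (1 / 2)) P)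
    (R : ℕ) (hR : 0 < R) (h : ℝ) (hh : 0 < h) :
    (h ≤ 1 / 2 →
      P {ω | (⌊1 + X ω + ((R : ℝ) + h)⌋ : ℝ) + 1 + Z ω - (2 + Y ω) ≤ (R : ℝ)} = 1 / 2) ∧
    (1 / 2 < h → h < 1 →
      P {ω | (⌊1 + X ω + ((R : ℝ) + h)⌋ : ℝ) + 1 + Z ω - (2 + Y ω) ≤ (R : ℝ)}
        = ENNReal.ofReal (1 - h)) ∧
    (1 ≤ h →
      P {ω | (⌊1 + X ω + ((R : ℝ) + h)⌋ : ℝ) + 1 + Z ω - (2 + Y ω) ≤ (R : ℝ)} = 0) :=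
  stmt_8_general P X Y Z hIndep hX hY hZ R h hh
end

section
/- Let X, Y, Z be independent random variables on a probability space (Ω, ℙ), each uniformly distributed on the interval [0, 1/2]. Let R be a positive integer and h a real number with 0 < h < 1/2, set ℓ := R + h, and define T := ⌊1 + X + ℓ⌋ + 1 + Z − (2 + Y). Then ℙ(T ≤ R) = 1/2. -/
/-!
Since `X ∈ [0, 1/2]` and `0 < h < 1/2`, the floor `⌊1 + X + R + h⌋` is always `R + 1`, so the
event `T ≤ R` is just `Z ≤ Y`. For independent, identically distributed real variables without
atoms, the events `Z ≤ Y` and `Y ≤ Z` have the same probability, cover everything and overlap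
only in the null diagonal, so each has probability `1/2`.
-/

open MeasureTheory ProbabilityTheory Set

namespace MeasureTheory.Measure

lemma prod_diagonal_eq_zero {α : Type*} [MeasurableSpace α] [MeasurableEq α] (μ ν : Measure α)
    [SFinite ν] [NullSingletonClass ν] : (μ.prod ν) (diagonal α) = 0 := by
  rw [measure_prod_null measurableSet_diagonal]
  refine Filter.Eventually.of_forall fun x => ?_
  have : Prod.mk x ⁻¹' diagonal α = {x} := by ext; simp [eq_comm]
  simp [this]

lemma prod_setOf_snd_le_fst (μ : Measure ℝ) [IsProbabilityMeasure μ] [NullSingletonClass μ] :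
    (μ.prod μ) {p | p.2 ≤ p.1} = 1 / 2 := by
  set s : Set (ℝ × ℝ) := {p | p.2 ≤ p.1}
  have hs : MeasurableSet s := measurableSet_le measurable_snd measurable_fst
  have hunion : s ∪ Prod.swap ⁻¹' s = univ := by ext p; simp [s, le_total]
  have hinter : s ∩ Prod.swap ⁻¹' s = diagonal ℝ := by ext p; simp [s, le_antisymm_iff, and_comm]
  have hswap : (μ.prod μ) (Prod.swap ⁻¹' s) = (μ.prod μ) s := by
    rw [← map_apply measurable_swap hs, prod_swap]
  have := measure_union_add_inter s (hs.preimage measurable_swap) (μ := μ.prod μ)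
  rw [hunion, hinter, hswap, measure_univ, prod_diagonal_eq_zero, add_zero] at this
  rw [ENNReal.eq_div_iff two_ne_zero ENNReal.ofNat_ne_top, two_mul, this]

end MeasureTheory.Measure

lemma ProbabilityTheory.IndepFun.measure_le_eq_half {Ω : Type*} [MeasurableSpace Ω]
    {P : Measure Ω} [IsProbabilityMeasure P] {Y Z : Ω → ℝ} (hYZ : IndepFun Y Z P)
    (hY : AEMeasurable Y P) (hZ : AEMeasurable Z P) (hlaw : P.map Z = P.map Y)
    [NullSingletonClass (P.map Y)] : P {ω | Z ω ≤ Y ω} = 1 / 2 := by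
  have hs : MeasurableSet {p : ℝ × ℝ | p.2 ≤ p.1} := measurableSet_le measurable_snd measurable_fst
  have := Measure.isProbabilityMeasure_map hY
  have hjoint : P.map (fun ω ↦ (Y ω, Z ω)) = (P.map Y).prod (P.map Y) := by
    rw [hYZ.map_prod_eq_prod_map_map hY hZ, hlaw]
  rw [← Measure.prod_setOf_snd_le_fst (P.map Y), ← hjoint,
    Measure.map_apply_of_aemeasurable (hY.prodMk hZ) hs]
  rfl

lemma floor_add_one_add_sub_le_natCast_iff {x y z h : ℝ} (n : ℕ) (h0 : 0 ≤ x + h)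
    (h1 : x + h < 1) : (⌊1 + x + (n + h)⌋ : ℝ) + 1 + z - (2 + y) ≤ n ↔ z ≤ y := by
  have hfloor : ⌊1 + x + (n + h)⌋ = n + 1 := by
    rw [Int.floor_eq_iff]; push_cast; constructor <;> linarith
  rw [hfloor]; push_cast
  constructor <;> intro _ <;> linarith

lemma MeasureTheory.pdf.IsUniform.ae_mem_s15 {Ω E : Type*} [MeasurableSpace Ω] [MeasurableSpace E]
    {P : Measure Ω} {μ : Measure E} {X : Ω → E} {s : Set E} (hs : MeasurableSet s)
    (hns : μ s ≠ 0) (hnt : μ s ≠ ⊤) (hX : pdf.IsUniform X s P μ) : ∀ᵐ ω ∂P, X ω ∈ s :=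
  ae_of_ae_map (hX.aemeasurable hns hnt) (hX ▸ ae_cond_mem hs)

theorem stmt_15_general {Ω : Type*} [MeasurableSpace Ω] (P : Measure Ω) [IsProbabilityMeasure P]
    (X Y Z : Ω → ℝ)
    (hIndep : iIndepFun ![X, Y, Z] P)
    (hX : pdf.IsUniform X (Set.Icc (0 : ℝ) (1 / 2)) P)
    (hY : pdf.IsUniform Y (Set.Icc (0 : ℝ) (1 / 2)) P)
    (hZ : pdf.IsUniform Z (Set.Icc (0 : ℝ) (1 / 2)) P)
    (R : ℕ) (h : ℝ) (hh0 : 0 < h) (hh1 : h < 1 / 2) :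
    P {ω | (⌊1 + X ω + ((R : ℝ) + h)⌋ : ℝ) + 1 + Z ω - (2 + Y ω) ≤ (R : ℝ)} = 1 / 2 := by
  have hns : volume (Icc (0 : ℝ) (1 / 2)) ≠ 0 := by simp [Real.volume_Icc]
  have hnt : volume (Icc (0 : ℝ) (1 / 2)) ≠ ⊤ := by simp [Real.volume_Icc]
  have hYZ : IndepFun Y Z P := by simpa using hIndep.indepFun (i := 1) (j := 2) (by decide)
  have : NullSingletonClass (P.map Y) := ⟨fun y ↦ hY.absolutelyContinuous (measure_singleton y)⟩
  calc P {ω | (⌊1 + X ω + ((R : ℝ) + h)⌋ : ℝ) + 1 + Z ω - (2 + Y ω) ≤ (R : ℝ)}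
      = P {ω | Z ω ≤ Y ω} := by
        refine measure_congr ((hX.ae_mem_s15 measurableSet_Icc hns hnt).mono fun ω hω ↦ ?_)
        exact propext (floor_add_one_add_sub_le_natCast_iff R (by linarith [hω.1])
          (by linarith [hω.2]))
    _ = 1 / 2 := hYZ.measure_le_eq_half (hY.aemeasurable hns hnt) (hZ.aemeasurable hns hnt)
        (hZ.trans hY.symm)

/-- Case (i) of the proof of Theorem 3: for `0 < h < 1/2` and `ℓ = R + h`,
the probability of the erroneous acceptance decision is `1/2`. -/
theorem stmt_15 {Ω : Type*} [MeasurableSpace Ω] (P : Measure Ω) [IsProbabilityMeasure P]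
    (X Y Z : Ω → ℝ)
    (hIndep : iIndepFun ![X, Y, Z] P)
    (hX : pdf.IsUniform X (Set.Icc (0 : ℝ) (1 / 2)) P)
    (hY : pdf.IsUniform Y (Set.Icc (0 : ℝ) (1 / 2)) P)
    (hZ : pdf.IsUniform Z (Set.Icc (0 : ℝ) (1 / 2)) P)
    (R : ℕ) (hR : 0 < R) (h : ℝ) (hh0 : 0 < h) (hh1 : h < 1 / 2) :
    P {ω | (⌊1 + X ω + ((R : ℝ) + h)⌋ : ℝ) + 1 + Z ω - (2 + Y ω) ≤ (R : ℝ)} = 1 / 2 :=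
  stmt_15_general P X Y Z hIndep hX hY hZ R h hh0 hh1
end
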